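/- For every x ∈ ℝ², every invertible real 2×2 matrix A, and every f ∈ L²(ℝ² × ℝ; ℂ), one has ∫_{ℝ²×ℝ} |(ρ₂[x,A]f)(ω, t)|² dω dt = ∫_{ℝ²×ℝ} |f(ω, t)|² dω dt. In particular ρ₂[x,A] is a unitary operator on L²(ℝ² × ℝ; ℂ). -/

import Mathlib

open MeasureTheory Matrix
open scoped ENNReal

noncomputable section

/-- `‖ω‖²`, the squared Euclidean norm of the row vector `ω`. -/
def nsq (ω : Fin 2 → ℝ) : ℝ := ω 0 ^ 2 + ω 1 ^ 2

/-- `u_{ω,A}` for a row vector `ω = (ω 0, ω 1)` and a matrix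
`A = [[a, b], [c, d]] = [[A 0 0, A 0 1], [A 1 0, A 1 1]]`. -/
def uu (ω : Fin 2 → ℝ) (A : Matrix (Fin 2) (Fin 2) ℝ) : ℝ :=
  ((A 0 0 * A 1 0 + A 0 1 * A 1 1) * (ω 0 ^ 2 - ω 1 ^ 2)
      - (A 0 0 ^ 2 + A 0 1 ^ 2 - A 1 0 ^ 2 - A 1 1 ^ 2) * (ω 0 * ω 1))
    / ((A 0 0 * ω 0 + A 1 0 * ω 1) ^ 2 + (A 0 1 * ω 0 + A 1 1 * ω 1) ^ 2)

/-- `v_{ω,A}`. -/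
def vv (ω : Fin 2 → ℝ) (A : Matrix (Fin 2) (Fin 2) ℝ) : ℝ :=
  ((A 0 0 * A 1 1 - A 0 1 * A 1 0) * (ω 0 ^ 2 + ω 1 ^ 2))
    / ((A 0 0 * ω 0 + A 1 0 * ω 1) ^ 2 + (A 0 1 * ω 0 + A 1 1 * ω 1) ^ 2)

/-- The operator `σ₂[x,A]` on functions of `(ω, ω₃) ∈ ℝ² × ℝ`:
`(σ₂[x,A]ξ)(ω, ω₃) = (|det A|·‖ω‖/‖ωA‖)·e^{2πi(ω·x + ω₃·u_{ω,A})}·ξ(ωA, ω₃·v_{ω,A})`. -/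
def sigma2 (x : Fin 2 → ℝ) (A : Matrix (Fin 2) (Fin 2) ℝ)
    (ξ : (Fin 2 → ℝ) × ℝ → ℂ) : (Fin 2 → ℝ) × ℝ → ℂ := fun p =>
  (((|A.det| * Real.sqrt (nsq p.1) / Real.sqrt (nsq (vecMul p.1 A))) : ℝ) : ℂ)
    * Complex.exp (((2 * Real.pi * (p.1 0 * x 0 + p.1 1 * x 1 + p.2 * uu p.1 A)) : ℝ) * Complex.I)
    * ξ (vecMul p.1 A, p.2 * vv p.1 A)

/-- The operator `ρ₂[x,A]` on functions of `(ω, t) ∈ ℝ² × ℝ`: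
`(ρ₂[x,A]f)(ω, t) = (‖ωA‖/‖ω‖)·e^{2πi ω·x}·f(ωA, (t − u_{ω,A})/v_{ω,A})`. -/
def rho2 (x : Fin 2 → ℝ) (A : Matrix (Fin 2) (Fin 2) ℝ)
    (f : (Fin 2 → ℝ) × ℝ → ℂ) : (Fin 2 → ℝ) × ℝ → ℂ := fun p =>
  (((Real.sqrt (nsq (vecMul p.1 A)) / Real.sqrt (nsq p.1)) : ℝ) : ℂ)
    * Complex.exp (((2 * Real.pi * (p.1 0 * x 0 + p.1 1 * x 1)) : ℝ) * Complex.I)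
    * f (vecMul p.1 A, (p.2 - uu p.1 A) / vv p.1 A)

/-! `ρ₂[x,A]f = m · (f ∘ T)` with `T(ω, t) = (ωA, (t − u_{ω,A})/v_{ω,A})` and
`|m(ω, t)|² = ‖ωA‖²/‖ω‖²`. Integrating first in `t` and then in `ω`, the Jacobian of `T` is
`|det A| / |v_{ω,A}|`, and `v_{ω,A} = det A · ‖ω‖²/‖ωA‖²`; so `|m|²` is exactly the Jacobian
of `T`, i.e. `T` pushes `|m|² dω dt` forward to `dω dt`. -/

lemma lintegral_comp_sub_div {h : ℝ → ℝ≥0∞} (hh : Measurable h) {a : ℝ} (ha : a ≠ 0) (b : ℝ) :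
    ∫⁻ t, h ((t - b) / a) = ENNReal.ofReal |a| * ∫⁻ s, h s := by
  have hdiv : Measurable fun s : ℝ => h (s / a) := hh.comp (measurable_div_const a)
  rw [(measurePreserving_sub_right volume b).lintegral_comp hdiv]
  simp_rw [div_eq_mul_inv]
  rw [← lintegral_map hh (measurable_mul_const a⁻¹), Real.map_volume_mul_right (inv_ne_zero ha),
    lintegral_smul_measure, inv_inv, smul_eq_mul]

lemma lintegral_prod_comp_sub_div {X : Type*} [MeasurableSpace X] {μ : Measure X} [SFinite μ]
    {F : X × ℝ → ℝ≥0∞} (hF : Measurable F) {a b : X → ℝ} (ha : Measurable a)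
    (hb : Measurable b) (ha₀ : ∀ᵐ ω ∂μ, a ω ≠ 0) :
    ∫⁻ p, F (p.1, (p.2 - b p.1) / a p.1) ∂μ.prod volume
      = ∫⁻ p, ENNReal.ofReal |a p.1| * F p ∂μ.prod volume := by
  rw [lintegral_prod _ (by fun_prop), lintegral_prod _ (by fun_prop)]
  refine lintegral_congr_ae (ha₀.mono fun ω hω => ?_)
  have hFω : Measurable fun t => F (ω, t) := hF.comp measurable_prodMk_left
  exact (lintegral_comp_sub_div hFω hω (b ω)).trans (lintegral_const_mul _ hFω).symm

lemma lintegral_comp_vecMul {n : Type*} [Fintype n] [DecidableEq n] {A : Matrix n n ℝ}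
    (hA : A.det ≠ 0) {g : (n → ℝ) → ℝ≥0∞} (hg : Measurable g) :
    ∫⁻ ω, g (ω ᵥ* A) = ENNReal.ofReal |A.det|⁻¹ * ∫⁻ ω, g ω := by
  have hA' : (fun ω : n → ℝ => ω ᵥ* A) = toLin' Aᵀ :=
    funext fun ω => by rw [toLin'_apply, mulVec_transpose]
  rw [← lintegral_map hg (by fun_prop), hA',
    Real.map_matrix_volume_pi_eq_smul_volume_pi (by rwa [det_transpose]),
    lintegral_smul_measure, det_transpose, abs_inv, smul_eq_mul]

lemma lintegral_prod_comp_vecMul {n Y : Type*} [Fintype n] [DecidableEq n] [MeasurableSpace Y]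
    {ν : Measure Y} [SFinite ν] {A : Matrix n n ℝ} (hA : A.det ≠ 0)
    {F : (n → ℝ) × Y → ℝ≥0∞} (hF : Measurable F) :
    ∫⁻ p, F (p.1 ᵥ* A, p.2) ∂volume.prod ν
      = ENNReal.ofReal |A.det|⁻¹ * ∫⁻ p, F p ∂volume.prod ν := by
  rw [lintegral_prod _ (by fun_prop), lintegral_prod _ hF.aemeasurable]
  exact lintegral_comp_vecMul hA hF.lintegral_prod_right'

lemma vecMul_ne_zero_of_det_ne_zero {n K : Type*} [Fintype n] [DecidableEq n] [Field K]
    {A : Matrix n n K} (hA : A.det ≠ 0) {ω : n → K} (hω : ω ≠ 0) : ω ᵥ* A ≠ 0 :=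
  fun h => hA (exists_vecMul_eq_zero_iff.1 ⟨ω, hω, h⟩)

lemma nsq_nonneg (ω : Fin 2 → ℝ) : 0 ≤ nsq ω := by
  unfold nsq
  positivity

lemma nsq_pos {ω : Fin 2 → ℝ} (hω : ω ≠ 0) : 0 < nsq ω := by
  have h : ω 0 ≠ 0 ∨ ω 1 ≠ 0 := by
    by_contra! h
    exact hω (funext fun i => by fin_cases i <;> simp [h.1, h.2])
  unfold nsq
  rcases h with h | h <;> positivity

lemma nsq_vecMul (ω : Fin 2 → ℝ) (A : Matrix (Fin 2) (Fin 2) ℝ) :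
    nsq (ω ᵥ* A) = (A 0 0 * ω 0 + A 1 0 * ω 1) ^ 2 + (A 0 1 * ω 0 + A 1 1 * ω 1) ^ 2 := by
  simp only [nsq, vecMul, dotProduct, Fin.sum_univ_two]
  ring

lemma vv_eq (ω : Fin 2 → ℝ) (A : Matrix (Fin 2) (Fin 2) ℝ) :
    vv ω A = A.det * nsq ω / nsq (ω ᵥ* A) := by
  rw [det_fin_two, nsq_vecMul]
  rfl

lemma abs_vv_mul_nsq_vecMul_div {A : Matrix (Fin 2) (Fin 2) ℝ} (hA : A.det ≠ 0)
    {ω : Fin 2 → ℝ} (hω : ω ≠ 0) : |vv ω A| * (nsq (ω ᵥ* A) / nsq ω) = |A.det| := by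
  have h₁ := nsq_pos hω
  have h₂ := nsq_pos (vecMul_ne_zero_of_det_ne_zero hA hω)
  rw [vv_eq, abs_div, abs_mul, abs_of_pos h₁, abs_of_pos h₂]
  field_simp

section Rho2

variable (A : Matrix (Fin 2) (Fin 2) ℝ)

def rho2Map (p : (Fin 2 → ℝ) × ℝ) : (Fin 2 → ℝ) × ℝ :=
  (p.1 ᵥ* A, (p.2 - uu p.1 A) / vv p.1 A)

def rho2Jacobian (ω : Fin 2 → ℝ) : ℝ≥0∞ :=
  ENNReal.ofReal (nsq (ω ᵥ* A) / nsq ω)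

lemma measurable_rho2Map : Measurable (rho2Map A) := by
  unfold rho2Map uu vv
  fun_prop

@[fun_prop]
lemma measurable_rho2Jacobian : Measurable (rho2Jacobian A) := by
  unfold rho2Jacobian nsq
  fun_prop

lemma nnnorm_rho2_sq (x : Fin 2 → ℝ) (f : (Fin 2 → ℝ) × ℝ → ℂ) (p : (Fin 2 → ℝ) × ℝ) :
    (‖rho2 x A f p‖₊ : ℝ≥0∞) ^ 2 = rho2Jacobian A p.1 * (‖f (rho2Map A p)‖₊ : ℝ≥0∞) ^ 2 := by
  have hmod : (‖((√(nsq (p.1 ᵥ* A)) / √(nsq p.1) : ℝ) : ℂ)‖₊ : ℝ≥0∞) ^ 2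
      = rho2Jacobian A p.1 := by
    rw [Complex.nnnorm_real, ← enorm_eq_nnnorm, Real.enorm_eq_ofReal_abs,
      ← ENNReal.ofReal_pow (abs_nonneg _), sq_abs, div_pow, Real.sq_sqrt (nsq_nonneg _),
      Real.sq_sqrt (nsq_nonneg _), rho2Jacobian]
  simp only [rho2, rho2Map, nnnorm_mul, Complex.nnnorm_exp_ofReal_mul_I, mul_one,
    ENNReal.coe_mul, mul_pow, hmod]

variable {A}

theorem lintegral_rho2Jacobian_mul_comp_rho2Map (hA : A.det ≠ 0)
    {F : (Fin 2 → ℝ) × ℝ → ℝ≥0∞} (hF : Measurable F) :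
    ∫⁻ p, rho2Jacobian A p.1 * F (rho2Map A p) = ∫⁻ p, F p := by
  have hω : ∀ᵐ p : (Fin 2 → ℝ) × ℝ, p.1 ≠ 0 :=
    Measure.quasiMeasurePreserving_fst.ae (Measure.ae_ne volume 0)
  have hvv : ∀ᵐ ω : Fin 2 → ℝ, vv ω A ≠ 0 :=
    (Measure.ae_ne volume 0).mono fun ω hω => by
      rw [vv_eq]
      exact div_ne_zero (mul_ne_zero hA (nsq_pos hω).ne')
        (nsq_pos (vecMul_ne_zero_of_det_ne_zero hA hω)).ne'
  calc ∫⁻ p, rho2Jacobian A p.1 * F (rho2Map A p)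
      = ∫⁻ p : (Fin 2 → ℝ) × ℝ,
          ENNReal.ofReal |vv p.1 A| * (rho2Jacobian A p.1 * F (p.1 ᵥ* A, p.2)) :=
        lintegral_prod_comp_sub_div (F := fun p => rho2Jacobian A p.1 * F (p.1 ᵥ* A, p.2))
          (b := fun ω => uu ω A)
          (by fun_prop) (by unfold vv; fun_prop) (by unfold uu; fun_prop) hvv
    _ = ∫⁻ p : (Fin 2 → ℝ) × ℝ, ENNReal.ofReal |A.det| * F (p.1 ᵥ* A, p.2) := by
        refine lintegral_congr_ae (hω.mono fun p hp => ?_)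
        dsimp only
        rw [← mul_assoc, rho2Jacobian, ← ENNReal.ofReal_mul (abs_nonneg _),
          abs_vv_mul_nsq_vecMul_div hA hp]
    _ = ∫⁻ p, F p := by
        rw [lintegral_const_mul _ (by fun_prop), Measure.volume_eq_prod,
          lintegral_prod_comp_vecMul hA hF, ← mul_assoc, ← ENNReal.ofReal_mul (abs_nonneg _),
          mul_inv_cancel₀ (abs_ne_zero.2 hA), ENNReal.ofReal_one, one_mul]

theorem measurePreserving_rho2Map (hA : A.det ≠ 0) :
    MeasurePreserving (rho2Map A) (volume.withDensity fun p => rho2Jacobian A p.1) volume := by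
  refine ⟨measurable_rho2Map A, Measure.ext_of_lintegral _ fun F hF => ?_⟩
  rw [lintegral_map hF (measurable_rho2Map A)]
  exact (lintegral_withDensity_eq_lintegral_mul _ (by fun_prop)
    (hF.comp (measurable_rho2Map A))).trans (lintegral_rho2Jacobian_mul_comp_rho2Map hA hF)

end Rho2

/-- `ρ₂[x,A]` preserves the `L²(ℝ²×ℝ)`-norm; in particular it is a unitary
operator on `L²(ℝ²×ℝ; ℂ)`. -/
theorem rho2_isometry (x : Fin 2 → ℝ) (A : Matrix (Fin 2) (Fin 2) ℝ)
    (hA : A.det ≠ 0) (f : (Fin 2 → ℝ) × ℝ → ℂ)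
    (hf : MemLp f 2 (volume : Measure ((Fin 2 → ℝ) × ℝ))) :
    ∫⁻ p : (Fin 2 → ℝ) × ℝ, (‖rho2 x A f p‖₊ : ℝ≥0∞) ^ 2
      = ∫⁻ p : (Fin 2 → ℝ) × ℝ, (‖f p‖₊ : ℝ≥0∞) ^ 2 := by
  have hT := measurePreserving_rho2Map hA
  have hf₂ : AEMeasurable (fun p => (‖f p‖₊ : ℝ≥0∞) ^ 2)
      ((volume.withDensity fun p => rho2Jacobian A p.1).map (rho2Map A)) := by
    rw [hT.map_eq]
    exact hf.1.enorm.pow_const 2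
  calc ∫⁻ p, (‖rho2 x A f p‖₊ : ℝ≥0∞) ^ 2
      = ∫⁻ p, rho2Jacobian A p.1 * (‖f (rho2Map A p)‖₊ : ℝ≥0∞) ^ 2 :=
        lintegral_congr (nnnorm_rho2_sq A x f)
    _ = ∫⁻ p, (‖f (rho2Map A p)‖₊ : ℝ≥0∞) ^ 2 ∂volume.withDensity fun p => rho2Jacobian A p.1 :=
        (lintegral_withDensity_eq_lintegral_mul_non_measurable _
          ((measurable_rho2Jacobian A).comp measurable_fst)
          (ae_of_all _ fun _ => ENNReal.ofReal_lt_top) _).symm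
    _ = ∫⁻ p, (‖f p‖₊ : ℝ≥0∞) ^ 2 := by
        rw [← lintegral_map' hf₂ hT.measurable.aemeasurable, hT.map_eq]
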